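/- Let a : ℕ → ℝ with a_k ≥ 0 for all k, and suppose there exists D > 0 with log(k+1) ≤ D·a_k for all k ≥ 1 (nuclearity of the power series space Λ_∞(a)). Then there exist b ∈ ℕ and a constant C ≥ 1 such that for every n ∈ ℕ and every x : ℕ → ℂ, with all sums taken in the extended nonnegative reals: (∑'_k ‖x_k‖²·e^{2n·a_k})^{1/2} ≤ ∑'_k ‖x_k‖·e^{n·a_k} and ∑'_k ‖x_k‖·e^{n·a_k} ≤ C·(∑'_k ‖x_k‖²·e^{2(n+b)·a_k})^{1/2}. In other words, the ℓ¹-grading and the ℓ²-grading of the nuclear power series space Λ_∞(a) are tamely equivalent. -/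

import Mathlib

open scoped ENNReal
open MeasureTheory

/-- Cauchy–Schwarz for `tsum` in `ℝ≥0∞`. -/
theorem cs16 (f g : ℕ → ℝ≥0∞) : ∑' k, f k * g k ≤
    (∑' k, (f k)^2)^((1:ℝ)/2) * (∑' k, (g k)^2)^((1:ℝ)/2) := by
  have h := ENNReal.lintegral_mul_le_Lp_mul_Lq (Measure.count : Measure ℕ)
    (Real.holderConjugate_iff (p := 2) (q := 2) |>.mpr ⟨by norm_num, by norm_num⟩)
    (measurable_of_countable f).aemeasurable (measurable_of_countable g).aemeasurable
  rw [lintegral_count, lintegral_count, lintegral_count] at h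
  have e2 : ∀ h : ℕ → ℝ≥0∞, (fun k => h k ^ (2:ℝ)) = fun k => h k ^ 2 := by
    intro h; funext k; rw [← ENNReal.rpow_natCast (h k) 2]; norm_num
  simp only [Pi.mul_apply] at h
  rw [e2 f, e2 g] at h
  exact h

/-- `ℓ² ≤ ℓ¹` for `tsum` in `ℝ≥0∞`. -/
theorem l2le1 (c : ℕ → ℝ≥0∞) : (∑' k, (c k)^2) ^ ((1:ℝ)/2) ≤ ∑' k, c k := by
  have h1 : (∑' k, (c k)^2) ≤ (∑' k, c k)^2 := by
    calc ∑' k, (c k)^2 ≤ ∑' k, c k * (∑' j, c j) := by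
          refine ENNReal.tsum_le_tsum fun k => ?_
          rw [sq]
          exact mul_le_mul_right (ENNReal.le_tsum k) _
      _ = (∑' k, c k)^2 := by rw [ENNReal.tsum_mul_right, sq]
  calc (∑' k, (c k)^2) ^ ((1:ℝ)/2) ≤ ((∑' k, c k)^2) ^ ((1:ℝ)/2) :=
        ENNReal.rpow_le_rpow h1 (by norm_num)
    _ = ∑' k, c k := by
        rw [← ENNReal.rpow_natCast (∑' k, c k) 2, ← ENNReal.rpow_mul]
        norm_num

/-- (Tame equivalence of the ℓ¹- and ℓ²-gradings of a nuclear power series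
space of infinite type.) If `a k ≥ 0` and `log (k+1) ≤ D · a k` for all `k ≥ 1` (some
`D > 0`), then there are `b ∈ ℕ` and `C ≥ 1` such that for every `n` and every
`x : ℕ → ℂ` one has `(∑' ‖x k‖² e^(2 n a k))^(1/2) ≤ ∑' ‖x k‖ e^(n a k)` and
`∑' ‖x k‖ e^(n a k) ≤ C · (∑' ‖x k‖² e^(2 (n+b) a k))^(1/2)`. -/
theorem stmt16 (a : ℕ → ℝ) (ha : ∀ k, 0 ≤ a k) (D : ℝ) (hD : 0 < D)
    (hnuc : ∀ k : ℕ, 1 ≤ k → Real.log ((k : ℝ) + 1) ≤ D * a k) :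
    ∃ (b : ℕ) (C : ℝ), 1 ≤ C ∧ ∀ (n : ℕ) (x : ℕ → ℂ),
      ((∑' k, ENNReal.ofReal (‖x k‖ ^ 2) *
          ENNReal.ofReal (Real.exp (2 * n * a k))) ^ ((1 : ℝ) / 2) ≤
        ∑' k, ENNReal.ofReal ‖x k‖ * ENNReal.ofReal (Real.exp (n * a k))) ∧
      ((∑' k, ENNReal.ofReal ‖x k‖ * ENNReal.ofReal (Real.exp (n * a k))) ≤
        ENNReal.ofReal C *
          (∑' k, ENNReal.ofReal (‖x k‖ ^ 2) *
            ENNReal.ofReal (Real.exp (2 * (n + b) * a k))) ^ ((1 : ℝ) / 2)) := by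
  set b : ℕ := ⌈D⌉₊ with hb
  have hDb : D ≤ (b : ℝ) := Nat.le_ceil D
  -- uniform bound on log
  have hlog : ∀ k : ℕ, Real.log ((k : ℝ) + 1) ≤ (b : ℝ) * a k := by
    intro k
    rcases Nat.eq_zero_or_pos k with rfl | hk
    · simpa using mul_nonneg (Nat.cast_nonneg b) (ha 0)
    · exact le_trans (hnuc k hk) (mul_le_mul_of_nonneg_right hDb (ha k))
  -- the weight sum
  set S : ℝ≥0∞ := ∑' k, ENNReal.ofReal (Real.exp (-(2 * b * a k))) with hS
  have hterm : ∀ k : ℕ, Real.exp (-(2 * b * a k)) ≤ 1 / ((k : ℝ) + 1)^2 := by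
    intro k
    have hk1 : (0:ℝ) < (k : ℝ) + 1 := by positivity
    have h1 : 2 * Real.log ((k : ℝ) + 1) ≤ 2 * b * a k := by
      rw [mul_assoc]; linarith [hlog k]
    have h2 : Real.exp (-(2 * b * a k)) ≤ Real.exp (-(2 * Real.log ((k : ℝ) + 1))) :=
      Real.exp_le_exp.mpr (by linarith)
    have h3 : Real.exp (-(2 * Real.log ((k : ℝ) + 1))) = 1 / ((k : ℝ) + 1)^2 := by
      rw [Real.exp_neg, two_mul, Real.exp_add, Real.exp_log hk1, sq]
      ring
    linarith
  have hsummable : Summable (fun k : ℕ => 1 / ((k : ℝ) + 1)^2) := by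
    have := (summable_nat_add_iff 1).mpr (Real.summable_one_div_nat_pow.mpr (le_refl 2))
    refine this.congr fun k => ?_
    push_cast
    ring_nf
  have hSlt : S < ∞ := by
    calc S ≤ ∑' (k : ℕ), ENNReal.ofReal (1 / ((k : ℝ) + 1)^2) :=
          ENNReal.tsum_le_tsum fun k => ENNReal.ofReal_le_ofReal (hterm k)
      _ = ENNReal.ofReal (∑' (k : ℕ), 1 / ((k : ℝ) + 1)^2) :=
          (ENNReal.ofReal_tsum_of_nonneg (fun k => by positivity) hsummable).symm
      _ < ∞ := ENNReal.ofReal_lt_top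
  have hShalf : S ^ ((1:ℝ)/2) ≠ ∞ := ENNReal.rpow_ne_top_of_nonneg (by norm_num) hSlt.ne
  refine ⟨b, max 1 (S ^ ((1:ℝ)/2)).toReal, le_max_left _ _, fun n x => ?_⟩
  have hSC : S ^ ((1:ℝ)/2) ≤ ENNReal.ofReal (max 1 (S ^ ((1:ℝ)/2)).toReal) := by
    conv_lhs => rw [← ENNReal.ofReal_toReal hShalf]
    exact ENNReal.ofReal_le_ofReal (le_max_right _ _)
  constructor
  · -- first inequality
    have heq : (∑' k, ENNReal.ofReal (‖x k‖ ^ 2) * ENNReal.ofReal (Real.exp (2 * n * a k)))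
        = ∑' k, (ENNReal.ofReal ‖x k‖ * ENNReal.ofReal (Real.exp (n * a k)))^2 := by
      refine tsum_congr fun k => ?_
      rw [mul_pow, ← ENNReal.ofReal_pow (norm_nonneg _), ← ENNReal.ofReal_pow (Real.exp_nonneg _),
        ← Real.exp_nat_mul]
      push_cast
      ring_nf
    rw [heq]
    exact l2le1 _
  · -- second inequality
    set f : ℕ → ℝ≥0∞ := fun k => ENNReal.ofReal ‖x k‖ * ENNReal.ofReal (Real.exp ((n + b) * a k))
    set g : ℕ → ℝ≥0∞ := fun k => ENNReal.ofReal (Real.exp (-(b * a k)))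
    have hsplit : (∑' k, ENNReal.ofReal ‖x k‖ * ENNReal.ofReal (Real.exp (n * a k)))
        = ∑' k, f k * g k := by
      refine tsum_congr fun k => ?_
      simp only [f, g]
      rw [mul_assoc, ← ENNReal.ofReal_mul (Real.exp_nonneg _), ← Real.exp_add]
      ring_nf
    have hf2 : (∑' k, (f k)^2)
        = ∑' k, ENNReal.ofReal (‖x k‖ ^ 2) * ENNReal.ofReal (Real.exp (2 * (n + b) * a k)) := by
      refine tsum_congr fun k => ?_
      simp only [f]
      rw [mul_pow, ← ENNReal.ofReal_pow (norm_nonneg _), ← ENNReal.ofReal_pow (Real.exp_nonneg _),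
        ← Real.exp_nat_mul]
      push_cast
      ring_nf
    have hg2 : (∑' k, (g k)^2) = S := by
      refine tsum_congr fun k => ?_
      simp only [g]
      rw [← ENNReal.ofReal_pow (Real.exp_nonneg _), ← Real.exp_nat_mul]
      push_cast
      ring_nf
    calc (∑' k, ENNReal.ofReal ‖x k‖ * ENNReal.ofReal (Real.exp (n * a k)))
        = ∑' k, f k * g k := hsplit
      _ ≤ (∑' k, (f k)^2)^((1:ℝ)/2) * (∑' k, (g k)^2)^((1:ℝ)/2) := cs16 f g
      _ ≤ (∑' k, (f k)^2)^((1:ℝ)/2) * ENNReal.ofReal (max 1 (S ^ ((1:ℝ)/2)).toReal) := by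
          rw [hg2]; exact mul_le_mul_right hSC _
      _ = ENNReal.ofReal (max 1 (S ^ ((1:ℝ)/2)).toReal) *
          (∑' k, ENNReal.ofReal (‖x k‖ ^ 2) *
            ENNReal.ofReal (Real.exp (2 * (n + b) * a k))) ^ ((1 : ℝ) / 2) := by
          rw [hf2, mul_comm]
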